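/- arXiv:2003.13944 — 4 statements merged into one kernel-verified Lean document; each statement's English description precedes it below -/
import Mathlib

section
/- Let C be a linear code in F_q^n and let C^⊥ be its dual code. Then the Hamming weight enumerator satisfies W_{C^⊥}(X,Y) = (1/|C|) · W_C(X+(q-1)Y, X-Y), where W_C(X,Y) = Σ_{c∈C} X^{n-wt(c)} Y^{wt(c)}. -/
/-!
Fix a primitive additive character `ψ` of `F`. The function `y ↦ X ^ (n - wt y) * Y ^ wt y`
factors over the coordinates, so its Fourier transform `x ↦ ∑_y ψ(x ⬝ᵥ y) X ^ (n - wt y) Y ^ wt y`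
factors too; a single coordinate contributes `X + (q - 1) Y` if `xᵢ = 0` and `X - Y` otherwise,
because `∑_t ψ(a t)` is `q` or `0` according as `a = 0` or not. Summing this transform over
`x ∈ C` and exchanging the sums leaves `∑_{x ∈ C} ψ(x ⬝ᵥ y)`, which is `|C|` for `y ∈ C^⊥` and `0`
otherwise, since `x ↦ ψ(x ⬝ᵥ y)` is then a nontrivial character of `C`. Such a `ψ` exists with
values in `ℂ`, into which `ℚ` embeds.
-/

open Finset

lemma AddChar.map_sum_eq_prod {A M ι : Type*} [AddCommMonoid A] [CommMonoid M]
    (ψ : AddChar A M) (s : Finset ι) (v : ι → A) :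
    ψ (∑ i ∈ s, v i) = ∏ i ∈ s, ψ (v i) :=
  map_prod ψ.toMonoidHom (fun i => Multiplicative.ofAdd (v i)) s

section Hamming

variable {ι F R : Type*} [Fintype ι] [Zero F] [DecidableEq F]

lemma natCard_setOf_ne_zero_eq_hammingNorm (y : ι → F) :
    Nat.card {i | y i ≠ 0} = hammingNorm y := by
  rw [hammingNorm, ← Fintype.card_subtype, Nat.card_eq_fintype_card]
  rfl

def weightMonomial [Monoid R] (X Y : R) (y : ι → F) : R :=
  X ^ (Fintype.card ι - hammingNorm y) * Y ^ hammingNorm y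

lemma prod_ite_eq_zero_eq_weightMonomial [CommMonoid R] (y : ι → F) (X Y : R) :
    ∏ i, (if y i = 0 then X else Y) = weightMonomial X Y y := by
  have hcard := card_filter_add_card_filter_not (s := univ) (fun i => y i = 0)
  rw [card_univ] at hcard
  rw [prod_ite, prod_const, prod_const, weightMonomial, hammingNorm]
  congr 2
  simp only [ne_eq] at *
  omega

end Hamming

section CharacterSums

variable {F R ι : Type*} [CommRing F] [Fintype F] [DecidableEq F] [CommRing R] [IsDomain R]
  [Fintype ι] [DecidableEq ι] {ψ : AddChar F R}

lemma AddChar.sum_mulShift_mul_ite (hψ : ψ.IsPrimitive) (a : F) (X Y : R) :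
    ∑ t : F, ψ (a * t) * (if t = 0 then X else Y) =
      if a = 0 then X + (Fintype.card F - 1) * Y else X - Y := by
  have hsplit : ∀ t, ψ (a * t) * (if t = 0 then X else Y) =
      Y * ψ (t * a) + if t = 0 then X - Y else 0 := by
    intro t
    split_ifs with ht <;> simp [ht, mul_comm]
  rw [sum_congr rfl fun t _ => hsplit t, sum_add_distrib, ← mul_sum, sum_mulShift a hψ,
    sum_ite_eq', if_pos (mem_univ _)]
  split_ifs <;> ring

lemma sum_addChar_dotProduct_mul_weightMonomial (hψ : ψ.IsPrimitive) (x : ι → F) (X Y : R) :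
    ∑ y, ψ (x ⬝ᵥ y) * weightMonomial X Y y =
      weightMonomial (X + (Fintype.card F - 1) * Y) (X - Y) x := by
  calc ∑ y, ψ (x ⬝ᵥ y) * weightMonomial X Y y
      = ∑ y : ι → F, ∏ i, ψ (x i * y i) * (if y i = 0 then X else Y) := by
        simp only [← prod_ite_eq_zero_eq_weightMonomial, dotProduct, AddChar.map_sum_eq_prod,
          prod_mul_distrib]
    _ = ∏ i, ∑ t, ψ (x i * t) * (if t = 0 then X else Y) :=
        (Fintype.prod_sum fun i t => ψ (x i * t) * (if t = 0 then X else Y)).symm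
    _ = weightMonomial (X + (Fintype.card F - 1) * Y) (X - Y) x := by
        simp only [AddChar.sum_mulShift_mul_ite hψ, prod_ite_eq_zero_eq_weightMonomial]

lemma sum_submodule_addChar_dotProduct (hψ : ψ.IsPrimitive) (C : Submodule F (ι → F))
    [DecidablePred (· ∈ C)] (y : ι → F) :
    ∑ x : C, ψ ((x : ι → F) ⬝ᵥ y) = if ∀ x ∈ C, x ⬝ᵥ y = 0 then (Nat.card C : R) else 0 := by
  split_ifs with horth
  · simp [horth, Nat.card_eq_fintype_card]
  · push Not at horth
    obtain ⟨x₀, hx₀, hs⟩ := horth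
    obtain ⟨u, hu⟩ := AddChar.ne_one_iff.1 (hψ hs)
    let φ : C →+ F := AddMonoidHom.mk' (fun x => (x : ι → F) ⬝ᵥ y) fun a b => by
      simp [add_dotProduct]
    refine AddChar.sum_eq_zero_of_ne_one (ψ := ψ.compAddMonoidHom φ) ?_
    refine AddChar.ne_one_iff.2 ⟨⟨u • x₀, C.smul_mem u hx₀⟩, ?_⟩
    simpa [φ, smul_dotProduct, mul_comm] using hu

theorem natCard_mul_sum_dual_weightMonomial (hψ : ψ.IsPrimitive) (C : Submodule F (ι → F))
    [DecidablePred (· ∈ C)] (X Y : R) :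
    (Nat.card C : R) * ∑ y with ∀ x ∈ C, x ⬝ᵥ y = 0, weightMonomial X Y y =
      ∑ x : C, weightMonomial (X + (Fintype.card F - 1) * Y) (X - Y) (x : ι → F) := by
  calc (Nat.card C : R) * ∑ y with ∀ x ∈ C, x ⬝ᵥ y = 0, weightMonomial X Y y
      = ∑ y, (if ∀ x ∈ C, x ⬝ᵥ y = 0 then (Nat.card C : R) else 0) * weightMonomial X Y y := by
        simp only [mul_sum, sum_filter, mul_ite, mul_zero, ite_mul, zero_mul]
    _ = ∑ y, (∑ x : C, ψ ((x : ι → F) ⬝ᵥ y)) * weightMonomial X Y y := by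
        simp only [sum_submodule_addChar_dotProduct hψ]
    _ = ∑ x : C, ∑ y, ψ ((x : ι → F) ⬝ᵥ y) * weightMonomial X Y y := by
        simp only [sum_mul]
        exact sum_comm
    _ = ∑ x : C, weightMonomial (X + (Fintype.card F - 1) * Y) (X - Y) (x : ι → F) := by
        simp only [sum_addChar_dotProduct_mul_weightMonomial hψ]

end CharacterSums

/-- **MacWilliams theorem.**  Let `C` be a linear code in `F_q^n` and `C^⊥` its dual code.
Then the Hamming weight enumerator satisfies
`W_{C^⊥}(X,Y) = (1/|C|) · W_C(X+(q-1)Y, X-Y)`,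
where `W_C(X,Y) = Σ_{c∈C} X^{n-wt(c)} Y^{wt(c)}`. -/
theorem macwilliams_identity (F : Type*) [Field F] [Fintype F] (q : ℕ)
    (hq : q = Fintype.card F) (n : ℕ) (C : Submodule F (Fin n → F)) (X Y : ℚ) :
    (∑ᶠ y ∈ {y : Fin n → F | ∀ x ∈ C, ∑ i, x i * y i = 0},
        X ^ (n - Nat.card {i | y i ≠ 0}) * Y ^ (Nat.card {i | y i ≠ 0})) =
      (1 / (Nat.card C : ℚ)) *
        ∑ᶠ c ∈ (C : Set (Fin n → F)),
          (X + ((q : ℚ) - 1) * Y) ^ (n - Nat.card {i | c i ≠ 0}) *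
            (X - Y) ^ (Nat.card {i | c i ≠ 0}) := by
  classical
  subst hq
  have hC : (Nat.card C : ℚ) ≠ 0 := Nat.cast_ne_zero.2 Nat.card_pos.ne'
  have key := natCard_mul_sum_dual_weightMonomial
    (AddChar.FiniteField.primitiveChar_to_Complex_isPrimitive F) C (X : ℂ) Y
  simp only [weightMonomial, Fintype.card_fin] at key
  simp only [natCard_setOf_ne_zero_eq_hammingNorm]
  rw [finsum_mem_eq_toFinset_sum, Set.toFinset_ofPred, ← finsum_set_coe_eq_finsum_mem,
    finsum_eq_sum_of_fintype, one_div, eq_inv_mul_iff_mul_eq₀ hC]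
  exact_mod_cast key
end

section
/- Let Ω be a set of n distinct points in the projective plane P² over a field, with n ≤ 2d+2. Then Ω fails to impose independent conditions on curves of degree d if and only if either d+2 of the points of Ω are collinear, or n = 2d+2 and Ω is contained in a conic. -/
/-!
Imposing independent conditions in degree `d` means that evaluation of degree-`d` forms at the
points is surjective. If `d + 2` of the points lie on a line, or `2d + 2` of them on a conic, the
multiples of the equation of that curve are a subspace of the kernel of evaluation large enough to
make surjectivity impossible.

Conversely, induct on `d`. Let `ℓ` be a line through as many points of `Ω` as possible. By
residuation along `ℓ`, the points off `ℓ` fail to impose independent conditions in degree `d - 1`,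
so the induction hypothesis applies to them: either `d + 1` of them lie on a second line, and `Ω`
lies on the union of the two lines, or all `2d` of them lie on a conic `Q`. In the latter case no
three points of `Ω` are collinear, and residuation along `Q` shows that `Q` also passes through the
last two points (for `d ≤ 2`, a dimension count gives the conic directly).
-/

open MvPolynomial Module
open scoped LinearAlgebra.Projectivization

namespace EGH

variable {K : Type*} [Field K]

theorem finrank_homogeneousSubmodule_fin_three (e : ℕ) :
    finrank K (homogeneousSubmodule (Fin 3) K e) = (e + 2).choose 2 := by
  have hs : {m : Fin 3 →₀ ℕ | m.degree = e} =
      ((Finset.univ : Finset (Fin 3)).finsuppAntidiag e : Set (Fin 3 →₀ ℕ)) := by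
    ext m; simp [Finsupp.degree_eq_sum]
  rw [homogeneousSubmodule_eq_finsupp_supported, hs]
  change finrank K (restrictSupport K _) = _
  rw [finrank_eq_card_basis (basisRestrictSupport K _)]
  simp only [Finset.coe_sort_coe, Fintype.card_coe, Finset.card_finsuppAntidiag_nat_eq_choose,
    Finset.card_univ, Fintype.card_fin]
  rw [show 3 + e - 1 = e + 2 by omega, Nat.choose_symm_add]

instance (e : ℕ) : FiniteDimensional K (homogeneousSubmodule (Fin 3) K e) :=
  Module.Finite.iff_fg.mpr (homogeneousSubmodule_fg _ _ e)

noncomputable def evalMap (S : Finset (ℙ K (Fin 3 → K))) (d : ℕ) :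
    homogeneousSubmodule (Fin 3) K d →ₗ[K] (S → K) :=
  LinearMap.pi fun p =>
    (aeval (p : ℙ K (Fin 3 → K)).rep).toLinearMap ∘ₗ (homogeneousSubmodule (Fin 3) K d).subtype

@[simp]
theorem evalMap_apply (S : Finset (ℙ K (Fin 3 → K))) (d : ℕ)
    (f : homogeneousSubmodule (Fin 3) K d) (p : S) :
    evalMap S d f p = eval (p : ℙ K (Fin 3 → K)).rep f := by
  simp [evalMap]

/-- Equivalent to the codimension condition of the theorem by `not_imposesIndepConditions_iff`. -/
def ImposesIndepConditions (S : Finset (ℙ K (Fin 3 → K))) (d : ℕ) : Prop :=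
  Function.Surjective (evalMap S d)

def OnCurve (r : ℕ) (S : Finset (ℙ K (Fin 3 → K))) : Prop :=
  ∃ g : MvPolynomial (Fin 3) K, g ≠ 0 ∧ g.IsHomogeneous r ∧ ∀ p ∈ S, eval p.rep g = 0

section Rank

variable {S : Finset (ℙ K (Fin 3 → K))} {d : ℕ}

theorem imposesIndepConditions_iff_card_add_finrank_ker :
    ImposesIndepConditions S d ↔
      S.card + finrank K (LinearMap.ker (evalMap S d)) = (d + 2).choose 2 := by
  have hS : finrank K (S → K) = S.card := by simp
  rw [← finrank_homogeneousSubmodule_fin_three (K := K),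
    ← (evalMap S d).finrank_range_add_finrank_ker, Nat.add_right_cancel_iff,
    ImposesIndepConditions, ← LinearMap.range_eq_top]
  constructor
  · intro h
    rw [h, finrank_top, hS]
  · intro h
    exact Submodule.eq_top_of_finrank_eq (h.symm.trans hS.symm)

theorem not_imposesIndepConditions_iff :
    ¬ ImposesIndepConditions S d ↔
      finrank K (homogeneousSubmodule (Fin 3) K d) -
        finrank K ↥(homogeneousSubmodule (Fin 3) K d ⊓
          ⨅ p ∈ S, LinearMap.ker (aeval (R := K) p.rep).toLinearMap) ≠ S.card := by
  have hker : LinearMap.ker (evalMap S d) =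
      Submodule.comap (homogeneousSubmodule (Fin 3) K d).subtype
        (homogeneousSubmodule (Fin 3) K d ⊓
        ⨅ p ∈ S, LinearMap.ker (aeval (R := K) p.rep).toLinearMap) := by
    ext f
    simp [funext_iff]
  have hle : finrank K (LinearMap.ker (evalMap S d)) ≤ (d + 2).choose 2 := by
    rw [← finrank_homogeneousSubmodule_fin_three (K := K)]
    exact Submodule.finrank_le _
  rw [imposesIndepConditions_iff_card_add_finrank_ker, finrank_homogeneousSubmodule_fin_three,
    ← (Submodule.comapSubtypeEquivOfLe inf_le_left).finrank_eq, ← hker]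
  omega

theorem ImposesIndepConditions.mono {T : Finset (ℙ K (Fin 3 → K))} (hTS : T ⊆ S)
    (h : ImposesIndepConditions S d) : ImposesIndepConditions T d := by
  classical
  intro c
  obtain ⟨f, hf⟩ := h fun p => if hp : (p : ℙ K (Fin 3 → K)) ∈ T then c ⟨p, hp⟩ else 0
  refine ⟨f, funext fun q => ?_⟩
  simpa using congrFun hf ⟨q, hTS q.2⟩

/-- Multiplication by an equation of the curve embeds forms of degree `e` into the kernel of
evaluation in degree `e + r`. -/
theorem choose_le_finrank_ker_of_onCurve {r e : ℕ} (hS : OnCurve r S) :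
    (e + 2).choose 2 ≤ finrank K (LinearMap.ker (evalMap S (e + r))) := by
  obtain ⟨g, hg0, hgr, hgS⟩ := hS
  let mulG : homogeneousSubmodule (Fin 3) K e →ₗ[K] homogeneousSubmodule (Fin 3) K (e + r) :=
    (LinearMap.mulLeft K g).restrict fun f hf => by
      simpa [add_comm e r] using hgr.mul ((mem_homogeneousSubmodule _ _).1 hf)
  have hinj : Function.Injective mulG := fun f f' h =>
    Subtype.ext (mul_left_cancel₀ hg0 (congrArg Subtype.val h))
  rw [← finrank_homogeneousSubmodule_fin_three (K := K), ← LinearMap.finrank_range_of_inj hinj]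
  refine Submodule.finrank_mono ?_
  rintro _ ⟨f, rfl⟩
  ext p
  simp [mulG, hgS _ p.2]

theorem onCurve_of_not_injective {r : ℕ} (h : ¬ Function.Injective (evalMap S r)) :
    OnCurve r S := by
  obtain ⟨g, hg, hg0⟩ := (Submodule.ne_bot_iff _).1 (mt LinearMap.ker_eq_bot.1 h)
  refine ⟨g, by simpa using hg0, g.2, fun p hp => ?_⟩
  simpa using congrFun (LinearMap.mem_ker.1 hg) ⟨p, hp⟩

theorem onCurve_or_imposesIndepConditions_of_card_le {r : ℕ}
    (hcard : S.card ≤ (r + 2).choose 2) :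
    OnCurve r S ∨ (S.card = (r + 2).choose 2 ∧ ImposesIndepConditions S r) := by
  by_cases hinj : Function.Injective (evalMap S r)
  · have hle := LinearMap.finrank_le_finrank_of_injective hinj
    rw [finrank_homogeneousSubmodule_fin_three, finrank_fintype_fun_eq_card,
      Fintype.card_coe] at hle
    have heq : S.card = (r + 2).choose 2 := le_antisymm hcard hle
    refine Or.inr ⟨heq, (LinearMap.injective_iff_surjective_of_finrank_eq_finrank ?_).1 hinj⟩
    simp [finrank_homogeneousSubmodule_fin_three, heq]
  · exact Or.inl (onCurve_of_not_injective hinj)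

end Rank

section LinearForms

noncomputable def linearForm (φ : Dual K (Fin 3 → K)) : MvPolynomial (Fin 3) K :=
  ∑ i, C (φ (Pi.single i 1)) * X i

theorem isHomogeneous_linearForm (φ : Dual K (Fin 3 → K)) : (linearForm φ).IsHomogeneous 1 :=
  IsHomogeneous.sum _ _ _ fun _ _ => isHomogeneous_C_mul_X _ _

theorem eval_linearForm (φ : Dual K (Fin 3 → K)) (v : Fin 3 → K) :
    eval v (linearForm φ) = φ v := by
  rw [LinearMap.pi_apply_eq_sum_univ φ v]
  simp only [linearForm, map_sum, map_mul, eval_C, eval_X, mul_comm]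
  refine Finset.sum_congr rfl fun i _ => congrArg _ (congrArg φ ?_)
  ext j
  simp [Pi.single_apply, eq_comm]

theorem exists_linearForm_of_notMem {W : Submodule K (Fin 3 → K)} {x : Fin 3 → K} (hx : x ∉ W) :
    ∃ ℓ : MvPolynomial (Fin 3) K, ℓ.IsHomogeneous 1 ∧ eval x ℓ ≠ 0 ∧ ∀ w ∈ W, eval w ℓ = 0 := by
  obtain ⟨φ, hφx, hφW⟩ := W.exists_dual_map_eq_bot_of_notMem hx inferInstance
  refine ⟨linearForm φ, isHomogeneous_linearForm φ, by rwa [eval_linearForm], fun w hw => ?_⟩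
  rw [eval_linearForm, ← Submodule.mem_bot K, ← hφW]
  exact Submodule.mem_map_of_mem hw

theorem exists_linearForm_eval_ne_zero (p : ℙ K (Fin 3 → K)) :
    ∃ ℓ : MvPolynomial (Fin 3) K, ℓ.IsHomogeneous 1 ∧ eval p.rep ℓ ≠ 0 := by
  obtain ⟨ℓ, hℓ, hp, -⟩ :=
    exists_linearForm_of_notMem (W := ⊥) (by simpa using p.rep_nonzero)
  exact ⟨ℓ, hℓ, hp⟩

theorem exists_linearForm_separating {p q : ℙ K (Fin 3 → K)} (hpq : p ≠ q) :
    ∃ ℓ : MvPolynomial (Fin 3) K, ℓ.IsHomogeneous 1 ∧ eval p.rep ℓ ≠ 0 ∧ eval q.rep ℓ = 0 := by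
  have hp : p.rep ∉ Submodule.span K {q.rep} := fun hmem => by
    obtain ⟨a, ha⟩ := Submodule.mem_span_singleton.1 hmem
    apply hpq
    rw [← p.mk_rep, ← q.mk_rep]
    exact (Projectivization.mk_eq_mk_iff' K _ _ _ _).2 ⟨a, ha⟩
  obtain ⟨ℓ, hℓ, hpℓ, hqℓ⟩ := exists_linearForm_of_notMem hp
  exact ⟨ℓ, hℓ, hpℓ, hqℓ _ (Submodule.mem_span_singleton_self _)⟩

theorem onCurve_one_of_card_le_two {S : Finset (ℙ K (Fin 3 → K))} (hS : S.card ≤ 2) :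
    OnCurve 1 S := by
  classical
  let reps : Finset (Fin 3 → K) := S.image fun p => p.rep
  have hW : Submodule.span K (reps : Set (Fin 3 → K)) ≠ ⊤ := fun h => by
    have hle := finrank_span_finset_le_card (R := K) reps
    rw [Set.finrank, h, finrank_top, finrank_fin_fun] at hle
    have : reps.card ≤ S.card := Finset.card_image_le
    omega
  obtain ⟨x, hx⟩ : ∃ x, x ∉ Submodule.span K (reps : Set (Fin 3 → K)) := by
    by_contra! h
    exact hW (Submodule.eq_top_iff'.2 h)
  obtain ⟨ℓ, hℓ, hxℓ, hWℓ⟩ := exists_linearForm_of_notMem hx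
  refine ⟨ℓ, fun h => by simp [h] at hxℓ, hℓ, fun p hp => hWℓ _ (Submodule.subset_span ?_)⟩
  exact Finset.mem_coe.2 (Finset.mem_image_of_mem _ hp)

end LinearForms

section Independence

variable {S : Finset (ℙ K (Fin 3 → K))} {d : ℕ}

theorem imposesIndepConditions_of_forall_exists_separator
    (h : ∀ p ∈ S, ∃ f ∈ homogeneousSubmodule (Fin 3) K d,
      eval p.rep f ≠ 0 ∧ ∀ q ∈ S, q ≠ p → eval q.rep f = 0) :
    ImposesIndepConditions S d := by
  classical
  choose F hF hFp hFq using h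
  intro c
  refine ⟨∑ p ∈ S.attach, (c p * (eval (p : ℙ K (Fin 3 → K)).rep (F p p.2))⁻¹) •
    ⟨F p p.2, hF p p.2⟩, funext fun q => ?_⟩
  rw [map_sum, Finset.sum_apply, Finset.sum_eq_single_of_mem q (S.mem_attach q)]
  · simp [hFp q q.2]
  · intro p _ hpq
    simp [hFq p p.2 q q.2 fun h => hpq (Subtype.ext h).symm]

theorem imposesIndepConditions_of_card_le (h : S.card ≤ d + 1) : ImposesIndepConditions S d := by
  classical
  refine imposesIndepConditions_of_forall_exists_separator fun p hp => ?_
  have hsep : ∀ q ∈ S.erase p, ∃ ℓ : MvPolynomial (Fin 3) K,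
      ℓ.IsHomogeneous 1 ∧ eval p.rep ℓ ≠ 0 ∧ eval q.rep ℓ = 0 :=
    fun q hq => exists_linearForm_separating (Finset.ne_of_mem_erase hq).symm
  choose! L hL1 hLp hLq using hsep
  obtain ⟨ℓ, hℓ1, hℓp⟩ := exists_linearForm_eval_ne_zero p
  have hprod : (∏ q ∈ S.erase p, L q).IsHomogeneous (S.erase p).card := by
    simpa using IsHomogeneous.prod _ _ (fun _ => 1) hL1
  have hdeg : (S.erase p).card + (d - (S.erase p).card) = d := by
    rw [Finset.card_erase_of_mem hp]; omega
  refine ⟨(∏ q ∈ S.erase p, L q) * ℓ ^ (d - (S.erase p).card), ?_, ?_, fun q hq hqp => ?_⟩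
  · simpa [hdeg] using hprod.mul (hℓ1.pow (d - (S.erase p).card))
  · simpa [Finset.prod_ne_zero_iff, hℓp] using
      fun q hqp hq => hLp q (Finset.mem_erase.2 ⟨hqp, hq⟩)
  · have hqp' : q ∈ S.erase p := Finset.mem_erase.2 ⟨hqp, hq⟩
    rw [map_mul, map_prod, Finset.prod_eq_zero hqp' (hLq q hqp'), zero_mul]

theorem card_filter_eval_eq_zero_add_ne_zero [DecidableEq K] (g : MvPolynomial (Fin 3) K) :
    (S.filter fun p => eval p.rep g = 0).card + (S.filter fun p => eval p.rep g ≠ 0).card =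
      S.card :=
  Finset.card_filter_add_card_filter_not _

/-- Interpolate on the curve `g = 0` first, then correct the values off the curve by adding `g`
times a form of degree `e`. -/
theorem imposesIndepConditions_of_filter [DecidableEq K] {e r : ℕ} {g : MvPolynomial (Fin 3) K}
    (hg : g.IsHomogeneous r)
    (hon : ImposesIndepConditions (S.filter fun p => eval p.rep g = 0) (e + r))
    (hoff : ImposesIndepConditions (S.filter fun p => eval p.rep g ≠ 0) e) :
    ImposesIndepConditions S (e + r) := by
  intro c
  obtain ⟨f, hf⟩ := hon fun p => c ⟨p, (Finset.mem_filter.1 p.2).1⟩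
  obtain ⟨f', hf'⟩ := hoff fun p =>
    (c ⟨p, (Finset.mem_filter.1 p.2).1⟩ - eval (p : ℙ K (Fin 3 → K)).rep f) /
      eval (p : ℙ K (Fin 3 → K)).rep g
  have hmem : (f : MvPolynomial (Fin 3) K) + g * f' ∈ homogeneousSubmodule (Fin 3) K (e + r) :=
    Submodule.add_mem _ f.2 (by simpa [add_comm r e] using hg.mul f'.2)
  refine ⟨⟨_, hmem⟩, funext fun p => ?_⟩
  by_cases hp : eval (p : ℙ K (Fin 3 → K)).rep g = 0
  · simpa [hp] using congrFun hf ⟨p, Finset.mem_filter.2 ⟨p.2, hp⟩⟩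
  · have := congrFun hf' ⟨p, Finset.mem_filter.2 ⟨p.2, hp⟩⟩
    simp only [evalMap_apply] at this
    simp [this, mul_div_cancel₀ _ hp]

def NoThreeCollinear (S : Finset (ℙ K (Fin 3 → K))) : Prop :=
  ∀ T ⊆ S, OnCurve 1 T → T.card ≤ 2

theorem onCurve_filter_eval_eq_zero [DecidableEq K] {r : ℕ} {g : MvPolynomial (Fin 3) K}
    (hg0 : g ≠ 0) (hg : g.IsHomogeneous r) : OnCurve r (S.filter fun p => eval p.rep g = 0) :=
  ⟨g, hg0, hg, fun _ hp => (Finset.mem_filter.1 hp).2⟩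

theorem imposesIndepConditions_of_noThreeCollinear (hS : NoThreeCollinear S)
    (hcard : S.card ≤ 2 * d + 1) : ImposesIndepConditions S d := by
  classical
  induction d generalizing S with
  | zero => exact imposesIndepConditions_of_card_le (by omega)
  | succ e ih =>
    by_cases hsmall : S.card ≤ e + 2
    · exact imposesIndepConditions_of_card_le hsmall
    obtain ⟨T, hTS, hT⟩ := Finset.exists_subset_card_eq (show 2 ≤ S.card by omega)
    obtain ⟨ℓ, hℓ0, hℓ1, hℓT⟩ := onCurve_one_of_card_le_two hT.le
    have hon := hS _ (Finset.filter_subset _ _) (onCurve_filter_eval_eq_zero hℓ0 hℓ1)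
    have hTon : T.card ≤ (S.filter fun p => eval p.rep ℓ = 0).card :=
      Finset.card_le_card fun p hp => Finset.mem_filter.2 ⟨hTS hp, hℓT p hp⟩
    have hsplit := card_filter_eval_eq_zero_add_ne_zero (S := S) ℓ
    exact imposesIndepConditions_of_filter hℓ1 (imposesIndepConditions_of_card_le (by omega))
      (ih (fun T hT => hS T (hT.trans (Finset.filter_subset _ _))) (by omega))

end Independence

section Dependence

variable {S : Finset (ℙ K (Fin 3 → K))} {d : ℕ}

theorem not_imposesIndepConditions_of_collinear (hS : OnCurve 1 S) (hcard : S.card = d + 2) :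
    ¬ ImposesIndepConditions S d := by
  rw [imposesIndepConditions_iff_card_add_finrank_ker]
  rcases d with _ | e
  · simp [hcard]
    omega
  · have hker := choose_le_finrank_ker_of_onCurve (e := e) hS
    have hchoose : (e + 1 + 2).choose 2 = (e + 2).choose 2 + (e + 2) := by
      simp [Nat.choose_succ_succ]
      omega
    omega

theorem not_imposesIndepConditions_of_onConic (hS : OnCurve 2 S) (hcard : S.card = 2 * d + 2) :
    ¬ ImposesIndepConditions S d := by
  rw [imposesIndepConditions_iff_card_add_finrank_ker]
  rcases d with _ | _ | e
  · simp [hcard]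
    omega
  · simp [hcard, Nat.choose]
    omega
  · rw [show e + 1 + 1 = e + 2 from rfl] at hcard ⊢
    have hker := choose_le_finrank_ker_of_onCurve (e := e) hS
    have hchoose : (e + 2 + 2).choose 2 = (e + 2).choose 2 + (2 * e + 5) := by
      simp [Nat.choose_succ_succ]
      omega
    omega

end Dependence

section Forward

variable {S : Finset (ℙ K (Fin 3 → K))}

theorem OnCurve.mono {r : ℕ} {T : Finset (ℙ K (Fin 3 → K))} (hTS : T ⊆ S) (hS : OnCurve r S) :
    OnCurve r T := by
  obtain ⟨g, hg0, hg, hgS⟩ := hS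
  exact ⟨g, hg0, hg, fun p hp => hgS p (hTS hp)⟩

theorem OnCurve.of_filter_eval_ne_zero [DecidableEq K] {r s : ℕ} {g : MvPolynomial (Fin 3) K}
    (hg0 : g ≠ 0) (hg : g.IsHomogeneous s) (h : OnCurve r (S.filter fun p => eval p.rep g ≠ 0)) :
    OnCurve (s + r) S := by
  obtain ⟨g', hg'0, hg', hg'S⟩ := h
  refine ⟨g * g', mul_ne_zero hg0 hg'0, hg.mul hg', fun p hp => ?_⟩
  by_cases hgp : eval p.rep g = 0
  · simp [hgp]
  · simp [hg'S p (Finset.mem_filter.2 ⟨hp, hgp⟩)]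

theorem exists_line_with_most_points [DecidableEq K] (hS : 2 ≤ S.card) :
    ∃ ℓ : MvPolynomial (Fin 3) K, ℓ ≠ 0 ∧ ℓ.IsHomogeneous 1 ∧
      2 ≤ (S.filter fun p => eval p.rep ℓ = 0).card ∧
      ∀ T ⊆ S, OnCurve 1 T → T.card ≤ (S.filter fun p => eval p.rep ℓ = 0).card := by
  classical
  obtain ⟨T₂, hT₂S, hT₂⟩ := Finset.exists_subset_card_eq hS
  have hT₂mem : T₂ ∈ S.powerset.filter (OnCurve 1) :=
    Finset.mem_filter.2 ⟨Finset.mem_powerset.2 hT₂S, onCurve_one_of_card_le_two hT₂.le⟩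
  obtain ⟨T₀, hT₀, hmax⟩ := Finset.exists_max_image _ Finset.card ⟨T₂, hT₂mem⟩
  obtain ⟨hT₀S, ℓ, hℓ0, hℓ1, hℓT₀⟩ := Finset.mem_filter.1 hT₀
  have hT₀A : T₀.card ≤ (S.filter fun p => eval p.rep ℓ = 0).card :=
    Finset.card_le_card fun p hp =>
      Finset.mem_filter.2 ⟨Finset.mem_powerset.1 hT₀S hp, hℓT₀ p hp⟩
  refine ⟨ℓ, hℓ0, hℓ1, by have := hmax T₂ hT₂mem; omega, fun T hTS hT => ?_⟩
  exact (hmax T (Finset.mem_filter.2 ⟨Finset.mem_powerset.2 hTS, hT⟩)).trans hT₀A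

theorem onConic_of_noThreeCollinear {d : ℕ} (hS : NoThreeCollinear S)
    (hcard : S.card = 2 * d + 2) (hdep : ¬ ImposesIndepConditions S d)
    {B : Finset (ℙ K (Fin 3 → K))} (hBS : B ⊆ S)
    (hB : 2 * d ≤ B.card) (hBQ : OnCurve 2 B) : OnCurve 2 S := by
  classical
  obtain hd | ⟨e, rfl⟩ : d ≤ 2 ∨ ∃ e, d = e + 1 + 2 :=
    (le_or_gt d 2).imp id fun hd => ⟨d - 3, by omega⟩
  · rcases onCurve_or_imposesIndepConditions_of_card_le (S := S) (r := 2)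
      (by simp [Nat.choose]; omega) with h | ⟨h6, hind⟩
    · exact h
    · obtain rfl : d = 2 := by simp [Nat.choose] at h6; omega
      exact absurd hind hdep
  · obtain ⟨Q, hQ0, hQ2, hQB⟩ := hBQ
    -- At most two points lie off `Q`, so residuation along `Q` would make `S` independent.
    by_contra hSQ
    obtain ⟨p, hp, hQp⟩ : ∃ p ∈ S, eval p.rep Q ≠ 0 := by
      by_contra! h
      exact hSQ ⟨Q, hQ0, hQ2, h⟩
    have hon : B.card ≤ (S.filter fun p => eval p.rep Q = 0).card :=
      Finset.card_le_card fun q hq => Finset.mem_filter.2 ⟨hBS hq, hQB q hq⟩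
    have hoff : 1 ≤ (S.filter fun p => eval p.rep Q ≠ 0).card :=
      Finset.card_pos.2 ⟨p, Finset.mem_filter.2 ⟨hp, hQp⟩⟩
    have hsplit := card_filter_eval_eq_zero_add_ne_zero (S := S) Q
    exact hdep (imposesIndepConditions_of_filter hQ2
      (imposesIndepConditions_of_noThreeCollinear
        (fun T hT => hS T (hT.trans (Finset.filter_subset _ _))) (by omega))
      (imposesIndepConditions_of_card_le (by omega)))

theorem onConic_of_not_imposesIndepConditions_succ {e : ℕ}
    (ih : ∀ B : Finset (ℙ K (Fin 3 → K)), B.card ≤ 2 * e + 2 → ¬ ImposesIndepConditions B e →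
      (∃ T ⊆ B, T.card = e + 2 ∧ OnCurve 1 T) ∨ (B.card = 2 * e + 2 ∧ OnCurve 2 B))
    (hcard : S.card ≤ 2 * (e + 1) + 2) (hdep : ¬ ImposesIndepConditions S (e + 1))
    (hcoll : ∀ T ⊆ S, OnCurve 1 T → T.card ≤ e + 2) :
    S.card = 2 * (e + 1) + 2 ∧ OnCurve 2 S := by
  classical
  have hlarge : e + 3 ≤ S.card := by
    by_contra h
    exact hdep (imposesIndepConditions_of_card_le (by omega))
  obtain ⟨ℓ, hℓ0, hℓ1, h2, hmax⟩ := exists_line_with_most_points (S := S) (by omega)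
  set A := S.filter fun p => eval p.rep ℓ = 0
  set B := S.filter fun p => eval p.rep ℓ ≠ 0
  have hsplit : A.card + B.card = S.card := card_filter_eval_eq_zero_add_ne_zero ℓ
  have hA : A.card ≤ e + 2 :=
    hcoll A (Finset.filter_subset _ _) (onCurve_filter_eval_eq_zero hℓ0 hℓ1)
  have hBdep : ¬ ImposesIndepConditions B e := fun hB =>
    hdep (imposesIndepConditions_of_filter hℓ1 (imposesIndepConditions_of_card_le (by omega)) hB)
  rcases ih B (by omega) hBdep with ⟨T, hTB, hT, hTline⟩ | ⟨hB, hBQ⟩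
  · have hTA := hmax T (hTB.trans (Finset.filter_subset _ _)) hTline
    have hTeq : T = B := Finset.eq_of_subset_of_card_le hTB (by omega)
    have hBline : OnCurve 1 B := hTeq ▸ hTline
    have hBcard : B.card = e + 2 := hTeq ▸ hT
    exact ⟨by omega, OnCurve.of_filter_eval_ne_zero (r := 1) hℓ0 hℓ1 hBline⟩
  · have hS : S.card = 2 * (e + 1) + 2 := by omega
    exact ⟨hS, onConic_of_noThreeCollinear (fun T hTS hT => (hmax T hTS hT).trans (by omega))
      hS hdep (B := B) (Finset.filter_subset _ _) (by omega) hBQ⟩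

theorem collinear_or_onConic_of_not_imposesIndepConditions {d : ℕ}
    (hcard : S.card ≤ 2 * d + 2) (hdep : ¬ ImposesIndepConditions S d) :
    (∃ T ⊆ S, T.card = d + 2 ∧ OnCurve 1 T) ∨ (S.card = 2 * d + 2 ∧ OnCurve 2 S) := by
  induction d generalizing S with
  | zero =>
    have h2 : S.card = 2 := by
      by_contra h
      exact hdep (imposesIndepConditions_of_card_le (by omega))
    exact Or.inl ⟨S, subset_rfl, h2, onCurve_one_of_card_le_two h2.le⟩
  | succ e ih =>
    by_cases hcoll : ∃ T ⊆ S, T.card = e + 1 + 2 ∧ OnCurve 1 T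
    · exact Or.inl hcoll
    refine Or.inr (onConic_of_not_imposesIndepConditions_succ (fun B => ih) hcard hdep
      fun T hTS hT => ?_)
    by_contra! hT3
    obtain ⟨T', hT'T, hT'⟩ := Finset.exists_subset_card_eq (show e + 1 + 2 ≤ T.card by omega)
    exact hcoll ⟨T', hT'T.trans hTS, hT', hT.mono hT'T⟩

end Forward

end EGH

/-- **(Eisenbud–Green–Harris.)**  Let `Ω` be a set of `n` distinct points in `P²` over a field,
with `n ≤ 2d+2`.  Then `Ω` fails to impose independent conditions on curves of degree `d`
(i.e. the subspace of degree-`d` forms vanishing on `Ω` has codimension `≠ |Ω|` in the space of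
all degree-`d` forms) if and only if either `d+2` of the points of `Ω` are collinear, or
`n = 2d+2` and `Ω` is contained in a conic. -/
theorem fails_independent_conditions_iff (K : Type*) [Field K] (d : ℕ)
    (Ω : Finset (Projectivization K (Fin 3 → K))) (hcard : Ω.card ≤ 2 * d + 2) :
    (Module.finrank K (homogeneousSubmodule (Fin 3) K d) -
        Module.finrank K ↥(homogeneousSubmodule (Fin 3) K d ⊓
          ⨅ p ∈ Ω, LinearMap.ker (aeval (R := K) p.rep).toLinearMap) ≠ Ω.card) ↔
      ((∃ T ⊆ Ω, T.card = d + 2 ∧ ∃ ℓ : MvPolynomial (Fin 3) K, ℓ ≠ 0 ∧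
          ℓ.IsHomogeneous 1 ∧ ∀ p ∈ T, eval p.rep ℓ = 0) ∨
        (Ω.card = 2 * d + 2 ∧ ∃ g : MvPolynomial (Fin 3) K, g ≠ 0 ∧
          g.IsHomogeneous 2 ∧ ∀ p ∈ Ω, eval p.rep g = 0)) := by
  rw [← EGH.not_imposesIndepConditions_iff]
  constructor
  · exact EGH.collinear_or_onConic_of_not_imposesIndepConditions hcard
  · rintro (⟨T, hTΩ, hT, hTline⟩ | ⟨hΩ, hΩconic⟩) hind
    · exact EGH.not_imposesIndepConditions_of_collinear hTline hT (hind.mono hTΩ)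
    · exact EGH.not_imposesIndepConditions_of_onConic hΩconic hΩ hind
end

section
/- Let c be a nonzero codeword of the dual code C_{2,3}^⊥ of the projective Reed-Muller code of plane cubics over F_q. Then wt(c) ≥ 5, and if wt(c) ∈ {5,6,7} then the support of c consists of wt(c) collinear points of P²(F_q). -/
/-!
If `c p ≠ 0` and the other points of the support of `c` lie on three lines missing `p`, the
product of the three linear forms is a cubic whose pairing with `c` is its value at `p` times
`c p ≠ 0`, contradicting duality. So it suffices to find such `p` and lines. With at most four
points in the support, any `p` works, with one line per remaining point. With five to seven points
not on a line: if some line misses at most three of them, take `p` among those and use that line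
together with one line per other missed point. Otherwise every line contains at most three of
them, so the lines through any `p` split the remaining points into classes of size at most two,
and those (at most six) points can be paired across classes; the line through a pair misses `p`.
-/

open MvPolynomial Finset Module Submodule
open scoped LinearAlgebra.Projectivization

section Pairing

variable {α β : Type*} [DecidableEq α] [DecidableEq β] (f : α → β)

theorem card_fiber_erase_erase_le {s : Finset α} {k : ℕ} (hs : #s ≤ 2 * (k + 1)) {x y z : α}
    (hx : x ∈ s) (hy : y ∈ s) (hyx : f y ≠ f x)
    (hxmax : ∀ w ∈ s, #{v ∈ s | f v = f w} ≤ #{v ∈ s | f v = f x})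
    (hymax : ∀ w ∈ s, f w ≠ f x → #{v ∈ s | f v = f w} ≤ #{v ∈ s | f v = f y})
    (hk : #{v ∈ s | f v = f x} ≤ k + 1) (hz : z ∈ (s.erase x).erase y) :
    #{v ∈ (s.erase x).erase y | f v = f z} ≤ k := by
  have hzs : z ∈ s := mem_of_mem_erase (mem_of_mem_erase hz)
  have hle_erase {u : α} (hu : u ∈ s) (hzu : f z = f u) (hut : u ∉ (s.erase x).erase y) :
      #{v ∈ (s.erase x).erase y | f v = f z} ≤ #{v ∈ s | f v = f u} - 1 := by
    rw [← card_erase_of_mem (s := {v ∈ s | f v = f u}) (mem_filter.2 ⟨hu, rfl⟩)]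
    refine card_le_card fun v hv => ?_
    obtain ⟨hvt, hvz⟩ := mem_filter.1 hv
    exact mem_erase.2 ⟨fun h => hut (h ▸ hvt),
      mem_filter.2 ⟨mem_of_mem_erase (mem_of_mem_erase hvt), hvz.trans hzu⟩⟩
  by_cases hzx : f z = f x
  · have := hle_erase hx hzx (by simp)
    omega
  by_cases hzy : f z = f y
  · have := hle_erase hy hzy (by simp)
    have := hxmax y hy
    omega
  have hthree : #{v ∈ s | f v = f z} + #{v ∈ s | f v = f y} + #{v ∈ s | f v = f x} ≤ #s := by
    have hsum := sum_card_fiberwise_eq_card_filter s {f z, f y, f x} f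
    rw [sum_insert (by simp [hzy, hzx]), sum_pair hyx] at hsum
    have := card_filter_le s (f · ∈ ({f z, f y, f x} : Finset β))
    omega
  have := card_le_card (filter_subset_filter (fun v => f v = f z)
    ((erase_subset y _).trans (erase_subset x s)))
  have := hymax z hzs hzx
  have := hxmax y hy
  omega

theorem exists_pairs_cover_of_card_fiber_le (k : ℕ) (s : Finset α) (hs : #s ≤ 2 * k)
    (hfiber : ∀ x ∈ s, #{y ∈ s | f y = f x} ≤ k) :
    ∃ P : Finset (α × α), #P ≤ k ∧ (∀ e ∈ P, e.1 ∈ s ∧ e.2 ∈ s ∧ (f e.1 = f e.2 → e.1 = e.2)) ∧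
      (s : Set α) ⊆ ⋃ e ∈ P, {e.1, e.2} := by
  induction k generalizing s with
  | zero => exact ⟨∅, by simp, by simp, by simp_all⟩
  | succ k ih =>
    by_cases hsk : #s ≤ k + 1
    · refine ⟨s.image fun x => (x, x), card_image_le.trans hsk, by simp, fun x hx => ?_⟩
      simp only [Set.mem_iUnion]
      exact ⟨(x, x), mem_image_of_mem _ hx, by simp⟩
    -- Pair a point of a largest fiber with a point of the largest other fiber.
    obtain ⟨x, hx, hxmax⟩ := s.exists_max_image (fun w => #{v ∈ s | f v = f w})
      (card_pos.1 (by omega))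
    have hsplit : #{v ∈ s | f v = f x} + #{v ∈ s | f v ≠ f x} = #s :=
      card_filter_add_card_filter_not _
    obtain ⟨y, hy, hymax⟩ := {w ∈ s | f w ≠ f x}.exists_max_image
      (fun w => #{v ∈ s | f v = f w}) (card_pos.1 (by have := hfiber x hx; omega))
    obtain ⟨hys, hyx⟩ := mem_filter.1 hy
    have hxy : x ≠ y := fun h => hyx (h ▸ rfl)
    obtain ⟨P, hP, hPs, hPcover⟩ := ih ((s.erase x).erase y)
      (by rw [card_erase_of_mem (mem_erase.2 ⟨hxy.symm, hys⟩), card_erase_of_mem hx]; omega)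
      fun z hz => card_fiber_erase_erase_le f hs hx hys hyx hxmax
        (fun w hw hwx => hymax w (mem_filter.2 ⟨hw, hwx⟩)) (hfiber x hx) hz
    refine ⟨insert (x, y) P, (card_insert_le _ _).trans (by omega), ?_, fun z hz => ?_⟩
    · simp only [mem_insert, forall_eq_or_imp]
      exact ⟨⟨hx, hys, fun h => absurd h.symm hyx⟩, fun e he =>
        (hPs e he).imp (fun h => mem_of_mem_erase (mem_of_mem_erase h))
          (And.imp_left fun h => mem_of_mem_erase (mem_of_mem_erase h))⟩
    · simp only [Set.mem_iUnion, mem_insert, exists_prop, exists_eq_or_imp]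
      by_cases hzxy : z = x ∨ z = y
      · exact Or.inl (by simpa using hzxy)
      · rw [not_or] at hzxy
        exact Or.inr (by simpa using hPcover (by simp [hzxy, hz]))

end Pairing

section LinearForm

variable {σ K : Type*} [Fintype σ] [DecidableEq σ] [CommSemiring K]

noncomputable def linearForm (φ : Dual K (σ → K)) : MvPolynomial σ K :=
  ∑ i, C (φ (Pi.single i 1)) * X i

theorem eval_linearForm (φ : Dual K (σ → K)) (v : σ → K) : eval v (linearForm φ) = φ v := by
  conv_rhs => rw [← univ_sum_single v]
  rw [linearForm, map_sum, map_sum]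
  refine sum_congr rfl fun i _ => ?_
  rw [map_mul, eval_C, eval_X, mul_comm, ← smul_eq_mul, ← map_smul, ← Pi.single_smul',
    smul_eq_mul, mul_one]

theorem isHomogeneous_linearForm (φ : Dual K (σ → K)) : (linearForm φ).IsHomogeneous 1 :=
  IsHomogeneous.sum _ _ _ fun i _ => by
    simpa using (isHomogeneous_C σ (φ (Pi.single i 1))).mul (isHomogeneous_X K i)

theorem linearForm_ne_zero {φ : Dual K (σ → K)} (hφ : φ ≠ 0) : linearForm φ ≠ 0 := by
  refine fun h => hφ (LinearMap.ext fun v => ?_)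
  rw [← eval_linearForm, h, map_zero, LinearMap.zero_apply]

end LinearForm

section ProjectiveGeometry

variable {K V : Type*} [Field K] [AddCommGroup V] [Module K V]

theorem rep_mem_span_singleton_rep_iff {p q : ℙ K V} : p.rep ∈ K ∙ q.rep ↔ p = q := by
  rw [mem_span_singleton, ← Projectivization.mk_rep p, ← Projectivization.mk_rep q,
    Projectivization.mk_eq_mk_iff']
  simp

theorem exists_dual_of_rep_notMem_span {p : ℙ K V} {s : Set V} (h : p.rep ∉ span K s) :
    ∃ φ : Dual K V, φ p.rep ≠ 0 ∧ ∀ v ∈ s, φ v = 0 := by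
  obtain ⟨φ, hφp, hφs⟩ := exists_dual_map_eq_bot_of_notMem h inferInstance
  exact ⟨φ, hφp, fun v hv =>
    (Submodule.eq_bot_iff _).1 hφs (φ v) (mem_map_of_mem (subset_span hv))⟩

theorem span_rep_pair_le_of_rep_mem {p x y : ℙ K V} (hy : p ≠ y)
    (h : p.rep ∈ span K {x.rep, y.rep}) : span K {p.rep, x.rep} ≤ span K {p.rep, y.rep} := by
  have hx : x.rep ∈ span K {p.rep, y.rep} :=
    mem_span_insert_exchange h (by rwa [rep_mem_span_singleton_rep_iff])
  rw [span_le, Set.insert_subset_iff, Set.singleton_subset_iff]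
  exact ⟨subset_span (by simp), hx⟩

theorem rep_notMem_span_pair {p x y : ℙ K V} (hx : p ≠ x) (hy : p ≠ y)
    (hxy : span K {p.rep, x.rep} = span K {p.rep, y.rep} → x = y) :
    p.rep ∉ span K {x.rep, y.rep} := by
  intro h
  obtain rfl := hxy <| le_antisymm (span_rep_pair_le_of_rep_mem hy h)
    (span_rep_pair_le_of_rep_mem hx (by rwa [Set.pair_comm]))
  rw [Set.pair_eq_singleton, rep_mem_span_singleton_rep_iff] at h
  exact hx h

theorem exists_dual_ne_zero_forall_mem_span_pair (hV : 2 < finrank K V) (a b : V) :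
    ∃ φ : Dual K V, φ ≠ 0 ∧ ∀ v ∈ span K {a, b}, φ v = 0 := by
  classical
  have hrank : finrank K (span K {a, b}) ≤ 2 := by
    have := finrank_span_finset_le_card (R := K) ({a, b} : Finset V)
    rw [Set.finrank, coe_pair] at this
    exact this.trans card_le_two
  obtain ⟨φ, hφ, hmap⟩ := exists_dual_map_eq_bot_of_lt_top
    (lt_top_of_finrank_lt_finrank (s := span K {a, b}) (by omega)) inferInstance
  exact ⟨φ, hφ, fun v hv => (Submodule.eq_bot_iff _).1 hmap _ (mem_map_of_mem hv)⟩

def IsHyperplaneCover (Φ : Finset (Dual K V)) (S : Set (ℙ K V)) (p : ℙ K V) : Prop :=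
  (∀ φ ∈ Φ, φ p.rep ≠ 0) ∧ ∀ q ∈ S, ∃ φ ∈ Φ, φ q.rep = 0

theorem IsHyperplaneCover.mono {Φ : Finset (Dual K V)} {S T : Set (ℙ K V)} {p : ℙ K V}
    (h : IsHyperplaneCover Φ T p) (hST : S ⊆ T) : IsHyperplaneCover Φ S p :=
  ⟨h.1, fun q hq => h.2 q (hST hq)⟩

theorem exists_isHyperplaneCover_biUnion {ι : Type*} (I : Finset ι) (A : ι → Set (ℙ K V))
    {p : ℙ K V} (hA : ∀ i ∈ I, p.rep ∉ span K (Projectivization.rep '' A i)) :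
    ∃ Φ : Finset (Dual K V), #Φ ≤ #I ∧ IsHyperplaneCover Φ (⋃ i ∈ I, A i) p := by
  classical
  choose! φ hφp hφA using fun i hi => exists_dual_of_rep_notMem_span (hA i hi)
  refine ⟨I.image φ, card_image_le, ?_, ?_⟩
  · simp only [mem_image, forall_exists_index, and_imp]
    rintro _ i hi rfl
    exact hφp i hi
  · simp only [Set.mem_iUnion]
    rintro q ⟨i, hi, hq⟩
    exact ⟨φ i, mem_image_of_mem φ hi, hφA i hi q.rep (Set.mem_image_of_mem _ hq)⟩

theorem exists_isHyperplaneCover_card_le (S : Finset (ℙ K V)) {p : ℙ K V} (hp : p ∉ S) :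
    ∃ Φ : Finset (Dual K V), #Φ ≤ #S ∧ IsHyperplaneCover Φ S p := by
  obtain ⟨Φ, hΦ, hcover⟩ := exists_isHyperplaneCover_biUnion S (fun x => {x}) fun x hx => by
    rw [Set.image_singleton, rep_mem_span_singleton_rep_iff]
    rintro rfl
    exact hp hx
  exact ⟨Φ, hΦ, hcover.mono fun q hq => by simpa using hq⟩

theorem exists_isHyperplaneCover_of_card_filter_ne_le [DecidableEq K] [DecidableEq (ℙ K V)]
    {S : Finset (ℙ K V)} {p : ℙ K V} (hp : p ∈ S) {φ : Dual K V} (hφ : φ p.rep ≠ 0) {k : ℕ}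
    (hk : #{q ∈ S | φ q.rep ≠ 0} ≤ k) :
    ∃ Φ : Finset (Dual K V), #Φ ≤ k ∧ IsHyperplaneCover Φ ↑(S.erase p) p := by
  classical
  set T := {q ∈ S | φ q.rep ≠ 0}
  have hpT : p ∈ T := mem_filter.2 ⟨hp, hφ⟩
  obtain ⟨Ψ, hΨ, hΨp, hΨT⟩ := exists_isHyperplaneCover_card_le (T.erase p) (notMem_erase p T)
  refine ⟨insert φ Ψ, ?_, forall_mem_insert _ _ _ |>.2 ⟨hφ, hΨp⟩, fun q hq => ?_⟩
  · rw [card_erase_of_mem hpT] at hΨ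
    have := card_insert_le φ Ψ
    have := card_pos.2 ⟨p, hpT⟩
    omega
  · obtain ⟨hqp, hqS⟩ := mem_erase.1 hq
    by_cases hφq : φ q.rep = 0
    · exact ⟨φ, mem_insert_self _ _, hφq⟩
    · obtain ⟨ψ, hψ, hψq⟩ := hΨT q (mem_erase.2 ⟨hqp, mem_filter.2 ⟨hqS, hφq⟩⟩)
      exact ⟨ψ, mem_insert_of_mem hψ, hψq⟩

theorem exists_isHyperplaneCover_of_card_filter_eq_le [DecidableEq K] [DecidableEq (ℙ K V)]
    (hV : 2 < finrank K V) {k : ℕ} {S : Finset (ℙ K V)} (hS : #S ≤ 2 * k + 1)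
    (hker : ∀ φ : Dual K V, φ ≠ 0 → #{q ∈ S | φ q.rep = 0} ≤ k + 1) {p : ℙ K V} (hp : p ∈ S) :
    ∃ Φ : Finset (Dual K V), #Φ ≤ k ∧ IsHyperplaneCover Φ ↑(S.erase p) p := by
  classical
  set L : ℙ K V → Submodule K V := fun x => span K {p.rep, x.rep}
  have hfiber : ∀ x ∈ S.erase p, #{y ∈ S.erase p | L y = L x} ≤ k := by
    intro x _
    obtain ⟨φ, hφ, hφL⟩ := exists_dual_ne_zero_forall_mem_span_pair hV p.rep x.rep
    have hsub : insert p {y ∈ S.erase p | L y = L x} ⊆ {q ∈ S | φ q.rep = 0} := by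
      intro q hq
      rcases mem_insert.1 hq with rfl | hq
      · exact mem_filter.2 ⟨hp, hφL _ (subset_span (by simp))⟩
      · obtain ⟨hqS, hqL⟩ := mem_filter.1 hq
        exact mem_filter.2 ⟨mem_of_mem_erase hqS,
          hφL _ (show q.rep ∈ L x from hqL ▸ subset_span (by simp))⟩
    have := card_le_card hsub
    rw [card_insert_of_notMem (by simp)] at this
    have := hker φ hφ
    omega
  obtain ⟨P, hP, hPS, hPcover⟩ := exists_pairs_cover_of_card_fiber_le L k (S.erase p)
    (by rw [card_erase_of_mem hp]; omega) hfiber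
  obtain ⟨Φ, hΦ, hcover⟩ := exists_isHyperplaneCover_biUnion P (fun e => {e.1, e.2})
    fun e he => by
      obtain ⟨h1, h2, hinj⟩ := hPS e he
      rw [Set.image_pair]
      exact rep_notMem_span_pair (ne_of_mem_erase h1).symm (ne_of_mem_erase h2).symm hinj
  exact ⟨Φ, hΦ.trans hP, hcover.mono hPcover⟩

theorem exists_isHyperplaneCover_of_card_le [DecidableEq (ℙ K V)] (hV : 2 < finrank K V) (k : ℕ)
    {S : Finset (ℙ K V)} (hS : #S ≤ 2 * k + 1) (hne : S.Nonempty)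
    (hspan : ∀ φ : Dual K V, φ ≠ 0 → ∃ q ∈ S, φ q.rep ≠ 0) :
    ∃ p ∈ S, ∃ Φ : Finset (Dual K V), #Φ ≤ k ∧ IsHyperplaneCover Φ ↑(S.erase p) p := by
  classical
  by_cases hoff : ∃ φ : Dual K V, φ ≠ 0 ∧ #{q ∈ S | φ q.rep ≠ 0} ≤ k
  · obtain ⟨φ, hφ, hk⟩ := hoff
    obtain ⟨p, hp, hφp⟩ := hspan φ hφ
    exact ⟨p, hp, exists_isHyperplaneCover_of_card_filter_ne_le hp hφp hk⟩
  · obtain ⟨p, hp⟩ := hne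
    refine ⟨p, hp, exists_isHyperplaneCover_of_card_filter_eq_le hV hS (fun φ hφ => ?_) hp⟩
    have hsplit : #{q ∈ S | φ q.rep = 0} + #{q ∈ S | φ q.rep ≠ 0} = #S :=
      card_filter_add_card_filter_not _
    have : ¬#{q ∈ S | φ q.rep ≠ 0} ≤ k := fun h => hoff ⟨φ, hφ, h⟩
    omega

end ProjectiveGeometry

section DualCode

variable {K σ : Type*} [Field K] [Fintype σ] [DecidableEq σ] [Fintype (ℙ K (σ → K))]

theorem apply_eq_zero_of_isHyperplaneCover {d : ℕ} {c : ℙ K (σ → K) → K}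
    (hc : ∀ f : MvPolynomial σ K, f.IsHomogeneous d → ∑ p, eval p.rep f * c p = 0)
    {p : ℙ K (σ → K)} {Φ : Finset (Dual K (σ → K))} (hΦ : #Φ ≤ d)
    (hcover : IsHyperplaneCover Φ {q | c q ≠ 0 ∧ q ≠ p} p) : c p = 0 := by
  obtain ⟨ψ, hψ⟩ := Projective.exists_dual_ne_zero K p.rep_nonzero
  set f := (∏ φ ∈ Φ, linearForm φ) * linearForm ψ ^ (d - #Φ)
  have hf : f.IsHomogeneous d := by
    convert (IsHomogeneous.prod Φ _ (fun _ => 1) fun φ _ => isHomogeneous_linearForm φ).mul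
      ((isHomogeneous_linearForm ψ).pow (d - #Φ)) using 1
    simp; omega
  have heval (q : ℙ K (σ → K)) : eval q.rep f = (∏ φ ∈ Φ, φ q.rep) * ψ q.rep ^ (d - #Φ) := by
    simp [f, eval_linearForm]
  have hsum := hc f hf
  rw [sum_eq_single p, heval] at hsum
  · exact (mul_eq_zero.1 hsum).resolve_left
      (mul_ne_zero (prod_ne_zero_iff.2 hcover.1) (pow_ne_zero _ hψ))
  · intro q _ hqp
    by_cases hq : c q = 0
    · rw [hq, mul_zero]
    · obtain ⟨φ, hφ, hφq⟩ := hcover.2 q ⟨hq, hqp⟩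
      rw [heval, prod_eq_zero hφ hφq, zero_mul, zero_mul]
  · simp

end DualCode

theorem dual_cubic_code_low_weight_supports_general (F : Type*) [Field F]
    [Fintype (Projectivization F (Fin 3 → F))]
    (c : Projectivization F (Fin 3 → F) → F)
    (hdual : ∀ f : MvPolynomial (Fin 3) F, f.IsHomogeneous 3 → ∑ p, eval p.rep f * c p = 0)
    (hc : c ≠ 0) :
    5 ≤ Nat.card {p | c p ≠ 0} ∧
    ((Nat.card {p | c p ≠ 0} = 5 ∨ Nat.card {p | c p ≠ 0} = 6 ∨
        Nat.card {p | c p ≠ 0} = 7) →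
      ∃ ℓ : MvPolynomial (Fin 3) F, ℓ ≠ 0 ∧ ℓ.IsHomogeneous 1 ∧
        ∀ p, c p ≠ 0 → eval p.rep ℓ = 0) := by
  classical
  set S : Finset (Projectivization F (Fin 3 → F)) := {p | c p ≠ 0}
  have hcard : Nat.card {p | c p ≠ 0} = #S := by
    rw [Nat.card_eq_card_toFinset]
    congr 1
    ext
    simp [S]
  have hno_cover (p) (hp : p ∈ S) (Φ : Finset (Dual F (Fin 3 → F))) (hΦ : #Φ ≤ 3) :
      ¬IsHyperplaneCover Φ ↑(S.erase p) p := fun hcover =>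
    (mem_filter.1 hp).2 <| apply_eq_zero_of_isHyperplaneCover hdual hΦ <|
      hcover.mono fun q hq => by simpa [S, and_comm] using hq
  obtain ⟨p₀, hp₀⟩ : S.Nonempty := by simpa [S, Finset.Nonempty, funext_iff] using hc
  rw [hcard]
  refine ⟨?_, fun hweight => ?_⟩
  · by_contra! hsmall
    obtain ⟨Φ, hΦ, hcover⟩ := exists_isHyperplaneCover_card_le (S.erase p₀) (notMem_erase p₀ S)
    exact hno_cover p₀ hp₀ Φ (by rw [card_erase_of_mem hp₀] at hΦ; omega) hcover
  · by_contra! hline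
    have hspan (φ : Dual F (Fin 3 → F)) (hφ : φ ≠ 0) : ∃ q ∈ S, φ q.rep ≠ 0 := by
      obtain ⟨q, hq, hφq⟩ := hline _ (linearForm_ne_zero hφ) (isHomogeneous_linearForm φ)
      exact ⟨q, by simpa [S] using hq, by rwa [eval_linearForm] at hφq⟩
    obtain ⟨p, hp, Φ, hΦ, hcover⟩ :=
      exists_isHyperplaneCover_of_card_le (by simp) 3 (by omega) ⟨p₀, hp₀⟩ hspan
    exact hno_cover p hp Φ hΦ hcover

/-- Supports of low-weight codewords of the dual `C_{2,3}^⊥` of the projective Reed–Muller code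
of plane cubics over `F_q` with `q > 2`: a nonzero dual codeword `c` has weight `≥ 5`, and if
`wt(c) ∈ {5,6,7}` then the support of `c` consists of `wt(c)` collinear points of `P²(F_q)`. -/
theorem dual_cubic_code_low_weight_supports (F : Type*) [Field F] [Fintype F]
    [Fintype (Projectivization F (Fin 3 → F))] (hq : 2 < Fintype.card F)
    (c : Projectivization F (Fin 3 → F) → F)
    (hdual : ∀ f : MvPolynomial (Fin 3) F, f.IsHomogeneous 3 → ∑ p, eval p.rep f * c p = 0)
    (hc : c ≠ 0) :
    5 ≤ Nat.card {p | c p ≠ 0} ∧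
    ((Nat.card {p | c p ≠ 0} = 5 ∨ Nat.card {p | c p ≠ 0} = 6 ∨
        Nat.card {p | c p ≠ 0} = 7) →
      ∃ ℓ : MvPolynomial (Fin 3) F, ℓ ≠ 0 ∧ ℓ.IsHomogeneous 1 ∧
        ∀ p, c p ≠ 0 → eval p.rep ℓ = 0) :=
  dual_cubic_code_low_weight_supports_general F c hdual hc
end

section
/- Fix d ≥ 1, let d+2 ≤ m ≤ q+1, and fix a set of m collinear points in P²(F_q). The number of codewords c of C_{2,d}^⊥ supported on these m points with wt(c) = m (i.e., nonzero at every one of the m points) equals f_d(m) = Σ_{i=0}^{m-d-2} (-1)^i · C(m,i) · (q^{m-d-1-i} - 1), where C(m,i) is the binomial coefficient. -/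
open MvPolynomial

/-- The linear functional `y ↦ Σ_i a i * y i` on `ι → F`. -/
noncomputable def coordPairing {F : Type*} [Field F] {ι : Type*} [Fintype ι] (a : ι → F) :
    (ι → F) →ₗ[F] F :=
  ∑ i, a i • LinearMap.proj i

/-- The dual code `C_{2,d}^⊥` of the projective Reed–Muller code of degree-`d` plane curves. -/
noncomputable def dualRMCode (F : Type*) [Field F] [Fintype F]
    [Fintype (Projectivization F (Fin 3 → F))] (d : ℕ) :
    Submodule F (Projectivization F (Fin 3 → F) → F) :=
  ⨅ f ∈ {f : MvPolynomial (Fin 3) F | f.IsHomogeneous d},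
    LinearMap.ker (coordPairing fun p => eval p.rep f)

/-!
A dual codeword supported on a set `S` of points of a line is a linear relation among the
evaluations at `S` of the degree-`d` forms. Solving the equation of the line for one coordinate,
these evaluations are those of binary forms of degree `d` at points of `P¹`, and distinct points
of `P¹` impose `min (#S) (d + 1)` independent conditions on such forms: a product of linear forms
vanishes at all of them but one. Hence the codewords supported in `S` form a space of dimension
`#S - (d + 1)`, and inclusion–exclusion over the points of `P` where a codeword vanishes gives the
count of those with full support.
-/

open Finset Matrix

theorem coordPairing_apply {F : Type*} [Field F] {ι : Type*} [Fintype ι] (a y : ι → F) :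
    coordPairing a y = ∑ i, a i * y i := by
  simp [coordPairing]

theorem card_filter_forall_not_eq_sum_powerset {β α : Type*} (U : Finset β)
    (P : Finset α) (R : β → α → Prop) [∀ b, DecidablePred (R b)] :
    (#{b ∈ U | ∀ a ∈ P, ¬R b a} : ℤ) =
      ∑ t ∈ P.powerset, (-1 : ℤ) ^ #t * #{b ∈ U | ∀ a ∈ t, R b a} := by
  classical
  simp only [card_filter, Nat.cast_sum, Nat.cast_ite, Nat.cast_one, Nat.cast_zero, mul_sum]
  rw [sum_comm]
  refine sum_congr rfl fun b _ => ?_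
  have hsub : {t ∈ P.powerset | ∀ a ∈ t, R b a} = {a ∈ P | R b a}.powerset := by
    ext t
    simp only [mem_filter, mem_powerset, subset_iff]
    grind
  simp_rw [← filter_eq_empty_iff, ← sum_powerset_neg_one_pow_card, ← hsub, sum_filter,
    mul_ite, mul_one, mul_zero]

theorem sum_range_choose_mul_neg_one_pow_mul_pow {R : Type*} [CommRing R] (q : R) {m n : ℕ}
    (hm : m ≠ 0) (hn : n ≤ m + 1) :
    ∑ k ∈ range (m + 1), (m.choose k : R) * ((-1) ^ k * q ^ (n - k)) =
      ∑ k ∈ range n, (-1) ^ k * m.choose k * (q ^ (n - k) - 1) := by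
  have hsplit : ∀ k ∈ range (m + 1), (m.choose k : R) * ((-1) ^ k * q ^ (n - k)) =
      (-1) ^ k * m.choose k * (q ^ (n - k) - 1) + (-1) ^ k * m.choose k := fun k _ => by ring
  have halt : ∑ k ∈ range (m + 1), (-1 : R) ^ k * m.choose k = 0 := by
    exact_mod_cast congrArg (Int.cast : ℤ → R) (Int.alternating_sum_range_choose_of_ne hm)
  rw [sum_congr rfl hsplit, sum_add_distrib, halt, add_zero]
  refine (sum_subset (range_subset_range.2 hn) fun k _ hk => ?_).symm
  rw [Nat.sub_eq_zero_of_le (not_lt.1 (mem_range.not.1 hk)), pow_zero, sub_self, mul_zero]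

section BinaryForm

variable {F : Type*} [Field F] {ι : Type*} [Fintype ι]

def momentMatrix (d : ℕ) (x : ι → Fin 2 → F) : Matrix ι (Fin (d + 1)) F :=
  Matrix.of fun i k => x i 0 ^ (k : ℕ) * x i 1 ^ (d - k)

theorem vecMul_momentMatrix_eq_zero_iff {d : ℕ} {x : ι → Fin 2 → F} {c : ι → F} :
    c ᵥ* momentMatrix d x = 0 ↔
      ∀ g : MvPolynomial (Fin 2) F, g.IsHomogeneous d → ∑ i, c i * eval (x i) g = 0 := by
  constructor
  · intro h g hg
    have hmonomial : ∀ μ ∈ g.support, ∑ i, c i * (x i 0 ^ μ 0 * x i 1 ^ μ 1) = 0 := by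
      intro μ hμ
      have hdeg : μ 0 + μ 1 = d := by
        simpa [Finsupp.weight_apply, Finsupp.sum_fintype, Fin.sum_univ_two] using
          hg (mem_support_iff.1 hμ)
      simpa [vecMul, dotProduct, momentMatrix, ← hdeg] using
        congrFun h (⟨μ 0, by omega⟩ : Fin (d + 1))
    simp only [eval_eq', Fin.prod_univ_two, mul_sum]
    rw [sum_comm]
    refine sum_eq_zero fun μ hμ => ?_
    rw [← mul_zero (coeff μ g), ← hmonomial μ hμ, mul_sum]
    exact sum_congr rfl fun i _ => by ring
  · intro h
    ext k
    have hk : (k : ℕ) + (d - k) = d := by omega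
    have := h (X 0 ^ (k : ℕ) * X 1 ^ (d - k))
      (hk ▸ (isHomogeneous_X_pow 0 _).mul (isHomogeneous_X_pow 1 _))
    simpa [vecMul, dotProduct, momentMatrix] using this

variable {d : ℕ} {x : ι → Fin 2 → F}

theorem mul_sub_mul_ne_zero_of_linearIndependent {a b : Fin 2 → F}
    (h : LinearIndependent F ![a, b]) : a 0 * b 1 - a 1 * b 0 ≠ 0 := by
  have := linearIndependent_rows_iff_isUnit.1
    (show LinearIndependent F (Matrix.of ![a, b]).row from h)
  simpa [isUnit_iff_isUnit_det, det_fin_two] using this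

theorem exists_isHomogeneous_eval_ne_zero_and_eq_zero (hx0 : ∀ i, x i ≠ 0)
    (hx : Pairwise fun i j => LinearIndependent F ![x i, x j]) (hcard : Fintype.card ι ≤ d + 1)
    (j : ι) : ∃ g : MvPolynomial (Fin 2) F,
      g.IsHomogeneous d ∧ eval (x j) g ≠ 0 ∧ ∀ i ≠ j, eval (x i) g = 0 := by
  classical
  obtain ⟨a, ha⟩ := Function.ne_iff.1 (hx0 j)
  refine ⟨(∏ i ∈ univ.erase j, (C (x i 1) * X 0 - C (x i 0) * X 1)) *
    X a ^ (d + 1 - Fintype.card ι), ?_, ?_, fun i hi => ?_⟩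
  · have := (IsHomogeneous.prod (univ.erase j) _ (fun _ => 1) fun i _ =>
      (isHomogeneous_C_mul_X (x i 1) 0).sub (isHomogeneous_C_mul_X (x i 0) 1)).mul
      (isHomogeneous_X_pow a (d + 1 - Fintype.card ι))
    have hdeg : ∑ i ∈ univ.erase j, 1 + (d + 1 - Fintype.card ι) = d := by
      have := Fintype.card_pos_iff.2 ⟨j⟩
      simp [card_erase_of_mem]
      omega
    rwa [hdeg] at this
  · simp only [map_mul, map_prod, map_pow, map_sub, eval_C, eval_X]
    refine mul_ne_zero (prod_ne_zero_iff.2 fun i hi => ?_) (pow_ne_zero _ ha)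
    have := mul_sub_mul_ne_zero_of_linearIndependent (hx (ne_of_mem_erase hi))
    contrapose! this
    linear_combination -this
  · simp only [map_mul, map_prod, map_sub, eval_C, eval_X]
    rw [prod_eq_zero (mem_erase.2 ⟨hi, mem_univ i⟩) (by ring), zero_mul]

theorem linearIndependent_row_momentMatrix (hx0 : ∀ i, x i ≠ 0)
    (hx : Pairwise fun i j => LinearIndependent F ![x i, x j])
    (hcard : Fintype.card ι ≤ d + 1) : LinearIndependent F (momentMatrix d x).row := by
  rw [Fintype.linearIndependent_iff]
  intro c hc j
  obtain ⟨g, hg, hj, hi⟩ := exists_isHomogeneous_eval_ne_zero_and_eq_zero hx0 hx hcard j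
  have hvec : c ᵥ* momentMatrix d x = 0 := by rwa [vecMul_eq_sum]
  have := vecMul_momentMatrix_eq_zero_iff.1 hvec g hg
  rw [sum_eq_single j (fun i _ hij => by rw [hi i hij, mul_zero]) (by simp)] at this
  exact (mul_eq_zero.1 this).resolve_right hj

theorem rank_momentMatrix (hx0 : ∀ i, x i ≠ 0)
    (hx : Pairwise fun i j => LinearIndependent F ![x i, x j]) :
    (momentMatrix d x).rank = min (Fintype.card ι) (d + 1) := by
  classical
  refine le_antisymm (le_min (rank_le_card_height _)
    ((rank_le_card_width _).trans_eq (Fintype.card_fin _))) ?_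
  obtain ⟨s, -, hs⟩ := (univ : Finset ι).exists_subset_card_eq
    (n := min (Fintype.card ι) (d + 1)) (by simp)
  have hrows : LinearIndependent F ((momentMatrix d x).submatrix Subtype.val id).row :=
    linearIndependent_row_momentMatrix (x := fun i : s => x i) (fun i => hx0 i)
      (hx.comp_of_injective Subtype.val_injective)
      (by rw [Fintype.card_coe, hs]; exact min_le_right _ _)
  calc min (Fintype.card ι) (d + 1) = ((momentMatrix d x).submatrix Subtype.val id).rank := by
        rw [hrows.rank_matrix, Fintype.card_coe, hs]
    _ ≤ (momentMatrix d x).rank := rank_submatrix_le _ _ _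

theorem finrank_ker_vecMulLinear_momentMatrix (hx0 : ∀ i, x i ≠ 0)
    (hx : Pairwise fun i j => LinearIndependent F ![x i, x j]) :
    Module.finrank F (LinearMap.ker (momentMatrix d x).vecMulLinear) =
      Fintype.card ι - (d + 1) := by
  have := LinearMap.finrank_range_add_finrank_ker (momentMatrix d x).vecMulLinear
  rw [← mulVecLin_transpose, ← Matrix.rank, rank_transpose, rank_momentMatrix hx0 hx,
    Module.finrank_fintype_fun_eq_card, mulVecLin_transpose] at this
  omega

end BinaryForm

section Hyperplane

variable {F : Type*} [Field F] {n : ℕ} {l : Fin (n + 1) → F} {j : Fin (n + 1)}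

/-- Solves `∑ i, l i * X i = 0` for `X j`, so that a point `v` of this hyperplane is recovered
from its other coordinates `v ∘ j.succAbove`. -/
noncomputable def hyperplaneSubst (l : Fin (n + 1) → F) (j : Fin (n + 1)) :
    Fin (n + 1) → MvPolynomial (Fin n) F :=
  j.insertNth (∑ k, C (-(l j)⁻¹ * l (j.succAbove k)) * X k) X

theorem isHomogeneous_hyperplaneSubst (i : Fin (n + 1)) :
    (hyperplaneSubst l j i).IsHomogeneous 1 := by
  refine j.succAboveCases ?_ (fun k => ?_) i
  · simpa [hyperplaneSubst] using
      IsHomogeneous.sum _ _ _ fun k _ => isHomogeneous_C_mul_X (-(l j)⁻¹ * l (j.succAbove k)) k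
  · simpa [hyperplaneSubst] using isHomogeneous_X F k

theorem eval_hyperplaneSubst (hj : l j ≠ 0) {v : Fin (n + 1) → F} (hv : coordPairing l v = 0) :
    (fun i => eval (v ∘ j.succAbove) (hyperplaneSubst l j i)) = v := by
  ext i
  refine j.succAboveCases ?_ (fun k => ?_) i
  · rw [coordPairing_apply, Fin.sum_univ_succAbove _ j] at hv
    simp only [hyperplaneSubst, Fin.insertNth_apply_same, map_sum, map_mul, eval_C, eval_X,
      Function.comp_apply]
    simp_rw [mul_assoc, ← mul_sum]
    field_simp
    linear_combination -hv
  · simp [hyperplaneSubst]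

theorem disjoint_ker_coordPairing_ker_funLeft (hj : l j ≠ 0) :
    Disjoint (LinearMap.ker (coordPairing l))
      (LinearMap.ker (LinearMap.funLeft F F j.succAbove)) := by
  rw [Submodule.disjoint_def]
  intro v hv hv'
  have hv' : v ∘ j.succAbove = 0 := hv'
  rw [← eval_hyperplaneSubst hj hv, hv']
  ext i
  refine j.succAboveCases ?_ (fun k => ?_) i <;> simp [hyperplaneSubst]

theorem forall_isHomogeneous_sum_eval_eq_zero_iff (hj : l j ≠ 0) {ι : Type*} [Fintype ι]
    {v : ι → Fin (n + 1) → F} (hv : ∀ p, coordPairing l (v p) = 0) (c : ι → F) (d : ℕ) :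
    (∀ f : MvPolynomial (Fin (n + 1)) F, f.IsHomogeneous d → ∑ p, c p * eval (v p) f = 0) ↔
      ∀ g : MvPolynomial (Fin n) F, g.IsHomogeneous d →
        ∑ p, c p * eval (v p ∘ j.succAbove) g = 0 := by
  constructor
  · intro h g hg
    simpa [eval_rename] using h (rename j.succAbove g) hg.rename_isHomogeneous
  · intro h f hf
    have heval (x : Fin n → F) : eval x (aeval (hyperplaneSubst l j) f) =
        eval (fun i => eval x (hyperplaneSubst l j i)) f :=
      eval₂Hom_bind₁ _ _ _ _
    have hsubst := h (aeval (hyperplaneSubst l j) f)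
      (by simpa only [one_mul] using hf.aeval _ isHomogeneous_hyperplaneSubst)
    simpa only [heval, eval_hyperplaneSubst hj (hv _)] using hsubst

variable {p q : Projectivization F (Fin (n + 1) → F)}

theorem comp_succAbove_rep_ne_zero (hj : l j ≠ 0) (hp : coordPairing l p.rep = 0) :
    p.rep ∘ j.succAbove ≠ 0 := fun h =>
  p.rep_nonzero ((Submodule.disjoint_def.1 (disjoint_ker_coordPairing_ker_funLeft hj)) _ hp h)

theorem linearIndependent_comp_succAbove_rep (hj : l j ≠ 0) (hp : coordPairing l p.rep = 0)
    (hq : coordPairing l q.rep = 0) (hpq : p ≠ q) :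
    LinearIndependent F ![p.rep ∘ j.succAbove, q.rep ∘ j.succAbove] := by
  have hspan : Submodule.span F (Set.range ![p.rep, q.rep]) ≤ LinearMap.ker (coordPairing l) := by
    rw [Submodule.span_le, Set.range_subset_iff]
    intro i
    fin_cases i <;> simpa
  have := (Projectivization.linearIndependent_pair_iff_ne.2 hpq).map
    ((disjoint_ker_coordPairing_ker_funLeft hj).mono_left hspan)
  have hcomp : LinearMap.funLeft F F j.succAbove ∘ ![p.rep, q.rep] =
      ![p.rep ∘ j.succAbove, q.rep ∘ j.succAbove] := by
    ext i : 1
    fin_cases i <;> rfl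
  rwa [hcomp] at this

end Hyperplane

theorem MvPolynomial.IsHomogeneous.exists_eval_eq_coordPairing {F σ : Type*} [Field F]
    [Fintype σ] {ℓ : MvPolynomial σ F} (h : ℓ.IsHomogeneous 1) (hℓ : ℓ ≠ 0) :
    ∃ l : σ → F, l ≠ 0 ∧ ∀ v, eval v ℓ = coordPairing l v := by
  classical
  have hsupp : ℓ.support ⊆ univ.image (Finsupp.single · 1) := fun μ hμ => by
    obtain ⟨i, rfl⟩ : μ ∈ Set.range (Finsupp.single · 1 : σ → σ →₀ ℕ) := by
      rw [Finsupp.range_single_one, Set.mem_ofPred_eq, Finsupp.degree_eq_weight_one]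
      exact h (mem_support_iff.1 hμ)
    exact mem_image_of_mem _ (mem_univ i)
  have hℓ_eq : ℓ = ∑ i, C (ℓ.coeff (Finsupp.single i 1)) * X i := by
    conv_lhs => rw [ℓ.as_sum]
    rw [sum_subset hsupp fun μ _ hμ => by rw [notMem_support_iff.1 hμ, monomial_zero],
      sum_image fun i _ k _ hik => Finsupp.single_left_injective one_ne_zero hik]
    simp [C_mul_X_eq_monomial]
  refine ⟨fun i => ℓ.coeff (Finsupp.single i 1), fun h0 => hℓ ?_, fun v => ?_⟩
  · rw [hℓ_eq]
    simp [congrFun h0]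
  · conv_lhs => rw [hℓ_eq]
    simp [coordPairing_apply]

theorem natCard_setOf_and_support_subset {α M : Type*} [Zero M] (S : Finset α)
    {Q : (α → M) → Prop} {Q' : (S → M) → Prop}
    (hQ : ∀ c : α → M, (∀ a, c a ≠ 0 → a ∈ S) → (Q c ↔ Q' fun a => c a)) :
    Nat.card {c | Q c ∧ ∀ a, c a ≠ 0 → a ∈ S} = Nat.card {c' | Q' c'} := by
  classical
  have hext (c' : S → M) (a : α) :
      (fun a => if h : a ∈ S then c' ⟨a, h⟩ else 0) a ≠ 0 → a ∈ S := fun ha => by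
    by_contra h
    simp [h] at ha
  have hres (c' : S → M) : (fun a : S => if h : (a : α) ∈ S then c' ⟨a, h⟩ else 0) = c' :=
    funext fun a => by simp [a.2]
  refine Nat.card_congr
    { toFun := fun c => ⟨fun a => c.1 a, (hQ _ c.2.2).1 c.2.1⟩
      invFun := fun c' => ⟨fun a => if h : a ∈ S then c'.1 ⟨a, h⟩ else 0,
        (hQ _ (hext c')).2 ((hres c').symm ▸ c'.2), hext c'⟩
      left_inv := fun c => Subtype.ext (funext fun a => ?_)
      right_inv := fun c' => by simp }
  by_cases h : a ∈ S
  · simp [h]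
  · simpa [h] using (not_imp_comm.1 (c.2.2 a) h).symm

section DualCode

variable {F : Type*} [Field F] [Fintype F] [Fintype (Projectivization F (Fin 3 → F))]

theorem mem_dualRMCode_iff {d : ℕ} {c : Projectivization F (Fin 3 → F) → F} :
    c ∈ dualRMCode F d ↔
      ∀ f : MvPolynomial (Fin 3) F, f.IsHomogeneous d → ∑ p, c p * eval p.rep f = 0 := by
  simp [dualRMCode, coordPairing_apply, mul_comm]

theorem natCard_dualRMCode_support_subset_line (d : ℕ)
    (S : Finset (Projectivization F (Fin 3 → F))) {l : Fin 3 → F} (hl : l ≠ 0)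
    (hS : ∀ p ∈ S, coordPairing l p.rep = 0) :
    Nat.card {c | c ∈ dualRMCode F d ∧ ∀ p, c p ≠ 0 → p ∈ S} =
      Fintype.card F ^ (#S - (d + 1)) := by
  classical
  obtain ⟨j, hj⟩ : ∃ j, l j ≠ 0 := Function.ne_iff.1 hl
  let x : S → Fin 2 → F := fun p => p.1.rep ∘ j.succAbove
  have hx0 (p : S) : x p ≠ 0 := comp_succAbove_rep_ne_zero hj (hS p p.2)
  have hx : Pairwise fun p q => LinearIndependent F ![x p, x q] := fun p q hpq =>
    linearIndependent_comp_succAbove_rep hj (hS p p.2) (hS q q.2) (Subtype.coe_injective.ne hpq)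
  rw [natCard_setOf_and_support_subset S
    (Q' := (· ∈ LinearMap.ker (momentMatrix d x).vecMulLinear))]
  · change Nat.card (LinearMap.ker (momentMatrix d x).vecMulLinear) = _
    rw [Module.natCard_eq_pow_finrank (K := F), finrank_ker_vecMulLinear_momentMatrix hx0 hx,
      Nat.card_eq_fintype_card, Fintype.card_coe]
  · intro c hc
    rw [mem_dualRMCode_iff, LinearMap.mem_ker, vecMulLinear_apply, vecMul_momentMatrix_eq_zero_iff,
      ← forall_isHomogeneous_sum_eval_eq_zero_iff hj (fun p : S => hS p p.2)]
    refine forall₂_congr fun f _ => ?_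
    rw [← sum_subset (subset_univ S) fun p _ hp => by rw [not_imp_comm.1 (hc p) hp, zero_mul],
      ← sum_coe_sort S]

theorem natCard_dualRMCode_support_eq_of_subset_line (d : ℕ)
    (P : Finset (Projectivization F (Fin 3 → F))) {l : Fin 3 → F} (hl : l ≠ 0)
    (hP : ∀ p ∈ P, coordPairing l p.rep = 0) :
    (Nat.card {c : Projectivization F (Fin 3 → F) → F |
        c ∈ dualRMCode F d ∧ (∀ p, c p ≠ 0 → p ∈ P) ∧ ∀ p ∈ P, c p ≠ 0} : ℤ) =
      ∑ k ∈ range (#P + 1), ((#P).choose k : ℤ) *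
        ((-1) ^ k * (Fintype.card F : ℤ) ^ (#P - d - 1 - k)) := by
  classical
  let U : Finset (Projectivization F (Fin 3 → F) → F) :=
    {c | c ∈ dualRMCode F d ∧ ∀ p, c p ≠ 0 → p ∈ P}
  have hU (t) (ht : t ⊆ P) :
      #{c ∈ U | ∀ p ∈ t, c p = 0} = Fintype.card F ^ (#P - d - 1 - #t) := by
    rw [show #P - d - 1 - #t = #(P \ t) - (d + 1) by rw [card_sdiff_of_subset ht]; omega,
      ← natCard_dualRMCode_support_subset_line d (P \ t) hl fun p hp => hP p (mem_sdiff.1 hp).1,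
      Nat.card_eq_card_toFinset, Set.toFinset_ofPred, filter_filter]
    refine congrArg card (filter_congr fun c _ => ?_)
    simp only [mem_sdiff]
    grind
  calc _ = (#{c ∈ U | ∀ p ∈ P, ¬c p = 0} : ℤ) := by
        rw [Nat.card_eq_card_toFinset, Set.toFinset_ofPred, filter_filter]
        simp only [and_assoc]
    _ = ∑ t ∈ P.powerset, (-1 : ℤ) ^ #t * #{c ∈ U | ∀ p ∈ t, c p = 0} := by
        convert card_filter_forall_not_eq_sum_powerset U P fun c p => c p = 0
    _ = _ := by
        rw [sum_congr rfl fun t ht => by rw [hU t (mem_powerset.1 ht)],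
          sum_powerset_apply_card
            fun k => (-1 : ℤ) ^ k * (Fintype.card F ^ (#P - d - 1 - k) : ℕ)]
        simp

end DualCode

theorem count_dual_codewords_full_support_general (F : Type*) [Field F] [Fintype F]
    [Fintype (Projectivization F (Fin 3 → F))] (q : ℕ) (hq : q = Fintype.card F)
    (d : ℕ) (m : ℕ) (P : Finset (Projectivization F (Fin 3 → F)))
    (hP : P.card = m) (hm1 : d + 2 ≤ m)
    (hcol : ∃ ℓ : MvPolynomial (Fin 3) F, ℓ ≠ 0 ∧ ℓ.IsHomogeneous 1 ∧
      ∀ p ∈ P, eval p.rep ℓ = 0) :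
    (Nat.card {c : Projectivization F (Fin 3 → F) → F |
        c ∈ dualRMCode F d ∧ (∀ p, c p ≠ 0 → p ∈ P) ∧ ∀ p ∈ P, c p ≠ 0} : ℤ) =
      ∑ i ∈ Finset.range (m - d - 1),
        (-1 : ℤ) ^ i * (m.choose i) * ((q : ℤ) ^ (m - d - 1 - i) - 1) := by
  obtain ⟨ℓ, hℓ0, hℓ1, hℓP⟩ := hcol
  obtain ⟨l, hl, hℓl⟩ := hℓ1.exists_eval_eq_coordPairing hℓ0
  subst hq hP
  rw [natCard_dualRMCode_support_eq_of_subset_line d P hl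
    fun p hp => (hℓl _).symm.trans (hℓP p hp)]
  exact sum_range_choose_mul_neg_one_pow_mul_pow _ (by omega) (by omega)

/-- For `d ≥ 1`, `d+2 ≤ m ≤ q+1` and a fixed set of `m` collinear points in `P²(F_q)`, the
number of codewords of `C_{2,d}^⊥` whose support is exactly this set of points equals
`f_d(m) = Σ_{i=0}^{m-d-2} (-1)^i·C(m,i)·(q^{m-d-1-i} - 1)`. -/
theorem count_dual_codewords_full_support (F : Type*) [Field F] [Fintype F]
    [Fintype (Projectivization F (Fin 3 → F))] (q : ℕ) (hq : q = Fintype.card F)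
    (d : ℕ) (hd : 1 ≤ d) (m : ℕ) (P : Finset (Projectivization F (Fin 3 → F)))
    (hP : P.card = m) (hm1 : d + 2 ≤ m) (hm2 : m ≤ q + 1)
    (hcol : ∃ ℓ : MvPolynomial (Fin 3) F, ℓ ≠ 0 ∧ ℓ.IsHomogeneous 1 ∧
      ∀ p ∈ P, eval p.rep ℓ = 0) :
    (Nat.card {c : Projectivization F (Fin 3 → F) → F |
        c ∈ dualRMCode F d ∧ (∀ p, c p ≠ 0 → p ∈ P) ∧ ∀ p ∈ P, c p ≠ 0} : ℤ) =
      ∑ i ∈ Finset.range (m - d - 1),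
        (-1 : ℤ) ^ i * (m.choose i) * ((q : ℤ) ^ (m - d - 1 - i) - 1) :=
  count_dual_codewords_full_support_general F q hq d m P hP hm1 hcol
end
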